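/- arXiv:2409.07330 — 3 statements merged into one kernel-verified Lean document; each statement's English description precedes it below -/
import Mathlib

section
/- Let V > 0 and δ ∈ (0, V]. Let f : (0, V) → ℝ satisfy f(v) > 0 for every v ∈ (0, V) and lim_{v→0⁺} f(v) = 0. Let η₁, η₂ : (0, δ) → ℝ be differentiable functions with η_j(t) > 0 for all t ∈ (0, δ) and lim_{t→0⁺} η_j(t) = 0 for j = 1, 2, and suppose f(v) ≥ min(η₁(v), η₂(v)) for all v ∈ (0, δ). Then sup_{v₁ ≠ v₂ ∈ (0,V)} |f(v₂) − f(v₁)| / |v₂ − v₁| ≥ min( liminf_{t→0⁺} η₁′(t), liminf_{t→0⁺} η₂′(t) ), where the supremum and the liminfs are taken in the extended reals. -/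
open Filter Topology Set

/-- Proposition on lower bounds for the Lipschitz constant of the isoperimetric profile:
if `f` is positive on `(0, V)` and tends to `0` at `0⁺`, and is bounded below near `0`
by the minimum of two differentiable functions `η₁, η₂` that vanish at `0⁺`, then the
(extended-real valued) Lipschitz constant of `f` is at least the minimum of the liminfs
of `η₁′` and `η₂′` at `0⁺`. -/
theorem lipschitz_lower_bound_of_min_two
    (V δ : ℝ) (hV : 0 < V) (hδ : δ ∈ Set.Ioc 0 V)
    (f η₁ η₂ : ℝ → ℝ)
    (hf_pos : ∀ v ∈ Set.Ioo 0 V, 0 < f v)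
    (hf_lim : Tendsto f (𝓝[>] (0 : ℝ)) (𝓝 0))
    (hη₁_diff : ∀ t ∈ Set.Ioo 0 δ, DifferentiableAt ℝ η₁ t)
    (hη₂_diff : ∀ t ∈ Set.Ioo 0 δ, DifferentiableAt ℝ η₂ t)
    (hη₁_pos : ∀ t ∈ Set.Ioo 0 δ, 0 < η₁ t)
    (hη₂_pos : ∀ t ∈ Set.Ioo 0 δ, 0 < η₂ t)
    (hη₁_lim : Tendsto η₁ (𝓝[>] (0 : ℝ)) (𝓝 0))
    (hη₂_lim : Tendsto η₂ (𝓝[>] (0 : ℝ)) (𝓝 0))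
    (hbound : ∀ v ∈ Set.Ioo 0 δ, min (η₁ v) (η₂ v) ≤ f v) :
    min (Filter.liminf (fun t => ((deriv η₁ t : ℝ) : EReal)) (𝓝[>] (0 : ℝ)))
        (Filter.liminf (fun t => ((deriv η₂ t : ℝ) : EReal)) (𝓝[>] (0 : ℝ)))
      ≤ sSup {r : EReal | ∃ v₁ ∈ Set.Ioo 0 V, ∃ v₂ ∈ Set.Ioo 0 V, v₁ ≠ v₂ ∧
          r = ((|f v₂ - f v₁| / |v₂ - v₁| : ℝ) : EReal)} := by
  set S : Set EReal := {r : EReal | ∃ v₁ ∈ Set.Ioo 0 V, ∃ v₂ ∈ Set.Ioo 0 V, v₁ ≠ v₂ ∧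
      r = ((|f v₂ - f v₁| / |v₂ - v₁| : ℝ) : EReal)} with hS
  by_contra hlt
  push_neg at hlt
  obtain ⟨c, hc1, hc2⟩ := EReal.exists_between_coe_real hlt
  -- hc1 : sSup S < c ; hc2 : c < min of liminfs
  have hc₁ : (c : EReal) < Filter.liminf (fun t => ((deriv η₁ t : ℝ) : EReal)) (𝓝[>] (0 : ℝ)) :=
    lt_of_lt_of_le hc2 (min_le_left _ _)
  have hc₂ : (c : EReal) < Filter.liminf (fun t => ((deriv η₂ t : ℝ) : EReal)) (𝓝[>] (0 : ℝ)) :=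
    lt_of_lt_of_le hc2 (min_le_right _ _)
  have he₁ := eventually_lt_of_lt_liminf hc₁
  have he₂ := eventually_lt_of_lt_liminf hc₂
  have hIoo : Set.Ioo (0:ℝ) δ ∈ 𝓝[>] (0:ℝ) := Ioo_mem_nhdsGT_of_mem ⟨le_rfl, hδ.1⟩
  have hall : ∀ᶠ t in 𝓝[>] (0:ℝ), t ∈ Set.Ioo 0 δ ∧ c < deriv η₁ t ∧ c < deriv η₂ t := by
    filter_upwards [hIoo, he₁, he₂] with t ht h1 h2
    exact ⟨ht, EReal.coe_lt_coe_iff.mp h1, EReal.coe_lt_coe_iff.mp h2⟩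
  obtain ⟨u, hu, husub⟩ := mem_nhdsGT_iff_exists_Ioo_subset.mp hall
  have hu0 : (0:ℝ) < u := hu
  set v : ℝ := u / 2 with hv
  have hvu : v ∈ Set.Ioo 0 u := ⟨by positivity, by simp [hv]; linarith⟩
  have hvδ : v ∈ Set.Ioo 0 δ := (husub hvu).1
  have hvV : v ∈ Set.Ioo 0 V := ⟨hvδ.1, lt_of_lt_of_le hvδ.2 hδ.2⟩
  -- key: c * v ≤ η v for each η
  have key : ∀ η : ℝ → ℝ, (∀ t ∈ Set.Ioo 0 δ, DifferentiableAt ℝ η t) →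
      Tendsto η (𝓝[>] (0:ℝ)) (𝓝 0) → (∀ t ∈ Set.Ioo 0 u, c < deriv η t) →
      c * v ≤ η v := by
    intro η hdiff hlim hder
    have hmvt : ∀ ε ∈ Set.Ioo (0:ℝ) v, c * (v - ε) ≤ η v - η ε := by
      intro ε hε
      have hεv : ε < v := hε.2
      have hsub : Set.Icc ε v ⊆ Set.Ioo 0 δ := fun x hx =>
        ⟨lt_of_lt_of_le hε.1 hx.1, lt_of_le_of_lt hx.2 hvδ.2⟩
      have hcont : ContinuousOn η (Set.Icc ε v) := fun x hx =>
        ((hdiff x (hsub hx)).continuousAt).continuousWithinAt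
      have hd : ∀ x ∈ Set.Ioo ε v, HasDerivAt η (deriv η x) x := fun x hx =>
        (hdiff x (hsub ⟨le_of_lt hx.1, le_of_lt hx.2⟩)).hasDerivAt
      obtain ⟨ξ, hξ, hξeq⟩ := exists_hasDerivAt_eq_slope η (deriv η) hεv hcont hd
      have hξu : ξ ∈ Set.Ioo 0 u := ⟨lt_trans hε.1 hξ.1, lt_trans hξ.2 hvu.2⟩
      have : c < (η v - η ε) / (v - ε) := hξeq ▸ hder ξ hξu
      have hvε : (0:ℝ) < v - ε := by linarith
      calc c * (v - ε) ≤ (η v - η ε) / (v - ε) * (v - ε) := by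
            exact mul_le_mul_of_nonneg_right (le_of_lt this) (le_of_lt hvε)
        _ = η v - η ε := by field_simp
    have h1 : Tendsto (fun ε => c * (v - ε)) (𝓝[>] (0:ℝ)) (𝓝 (c * v)) := by
      have : Tendsto (fun ε : ℝ => c * (v - ε)) (𝓝 (0:ℝ)) (𝓝 (c * (v - 0))) :=
        (tendsto_const_nhds.sub tendsto_id).const_mul c
      simpa using this.mono_left nhdsWithin_le_nhds
    have h2 : Tendsto (fun ε => η v - η ε) (𝓝[>] (0:ℝ)) (𝓝 (η v)) := by
      simpa using tendsto_const_nhds.sub hlim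
    exact le_of_tendsto_of_tendsto h1 h2
      (Filter.eventually_iff_exists_mem.mpr ⟨Set.Ioo 0 v, Ioo_mem_nhdsGT_of_mem ⟨le_rfl, hvu.1⟩, hmvt⟩)
  have hk₁ : c * v ≤ η₁ v := key η₁ hη₁_diff hη₁_lim fun t ht => (husub ht).2.1
  have hk₂ : c * v ≤ η₂ v := key η₂ hη₂_diff hη₂_lim fun t ht => (husub ht).2.2
  have hfv : c * v ≤ f v := le_trans (le_min hk₁ hk₂) (hbound v hvδ)
  have hcv : c ≤ f v / v := (le_div_iff₀ hvδ.1).mpr hfv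
  -- slopes tend to f v / v
  have hslope : Tendsto (fun v₁ => ((|f v - f v₁| / |v - v₁| : ℝ) : EReal)) (𝓝[>] (0:ℝ))
      (𝓝 ((f v / v : ℝ) : EReal)) := by
    rw [EReal.tendsto_coe]
    have hnum : Tendsto (fun v₁ => |f v - f v₁|) (𝓝[>] (0:ℝ)) (𝓝 |f v - 0|) :=
      (tendsto_const_nhds.sub hf_lim).abs
    have hid : Tendsto (fun v₁ : ℝ => v₁) (𝓝[>] (0:ℝ)) (𝓝 0) :=
      tendsto_id.mono_left nhdsWithin_le_nhds
    have hden : Tendsto (fun v₁ => |v - v₁|) (𝓝[>] (0:ℝ)) (𝓝 |v - 0|) :=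
      (tendsto_const_nhds.sub hid).abs
    have habs : |v - 0| = v := by rw [sub_zero, abs_of_pos hvδ.1]
    have hfabs : |f v - 0| = f v := by rw [sub_zero, abs_of_pos (hf_pos v hvV)]
    have := hnum.div hden (by rw [habs]; exact ne_of_gt hvδ.1)
    rwa [habs, hfabs] at this
  have hmemS : ∀ᶠ v₁ in 𝓝[>] (0:ℝ),
      ((|f v - f v₁| / |v - v₁| : ℝ) : EReal) ≤ sSup S := by
    filter_upwards [Ioo_mem_nhdsGT_of_mem (Set.left_mem_Ico.mpr hvδ.1)] with v₁ hv₁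
    exact le_sSup ⟨v₁, ⟨hv₁.1, lt_trans hv₁.2 hvV.2⟩, v, hvV, ne_of_lt hv₁.2, rfl⟩
  have hle : ((f v / v : ℝ) : EReal) ≤ sSup S := le_of_tendsto hslope hmemS
  have : (c : EReal) ≤ sSup S := le_trans (EReal.coe_le_coe_iff.mpr hcv) hle
  exact absurd this (not_le.mpr hc1)
end

section
/- Let A ∈ ℝ, c > 0, and let n ≥ 1 be a natural number. Let ρ, ψ : (A, ∞) → ℝ be continuously differentiable with ρ(t) > 0 and ψ(t) > 0 for all t > A, and suppose the function s ↦ ψ(s)·ρ(s)ⁿ is integrable on (A, ∞). Set v₀ = c·∫_A^∞ ψ(s)ρ(s)ⁿ ds, define v(t) = c·∫_t^∞ ψ(s)ρ(s)ⁿ ds, let τ : (0, v₀) → (A, ∞) be the inverse of v, and set η(w) = c·ρ(τ(w))ⁿ. Assume in addition that ρ′(t) < 0 for all t > A and that the function t ↦ ρ′(t)/(ρ(t)·ψ(t)) is nonincreasing on (A, ∞). Then the limit lim_{t→∞} ρ′(t)/(ρ(t)·ψ(t)) exists in [−∞, 0], and lim_{w→0⁺} η′(w) = −n·lim_{t→∞}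 ρ′(t)/(ρ(t)·ψ(t)) in the extended reals. -/
open Filter Topology Set MeasureTheory

/-- For a warped-product end with `ρ′ < 0` and `ρ′/(ρψ)` nonincreasing, the limit
`lim_{t→∞} ρ′/(ρψ)` exists in `[−∞, 0]` and the derivative of the profile lower bound
`η(w) = c·ρ(τ(w))ⁿ` satisfies `lim_{w→0⁺} η′(w) = −n·lim_{t→∞} ρ′/(ρψ)` in the
extended reals. -/
theorem warped_end_profile_deriv_limit
    (A c : ℝ) (hc : 0 < c) (n : ℕ) (hn : 1 ≤ n)
    (ρ ψ : ℝ → ℝ)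
    (hρ : ContDiffOn ℝ 1 ρ (Set.Ioi A)) (hψ : ContDiffOn ℝ 1 ψ (Set.Ioi A))
    (hρ_pos : ∀ t ∈ Set.Ioi A, 0 < ρ t) (hψ_pos : ∀ t ∈ Set.Ioi A, 0 < ψ t)
    (hint : IntegrableOn (fun s => ψ s * ρ s ^ n) (Set.Ioi A))
    (v : ℝ → ℝ) (hv : ∀ t, v t = c * ∫ s in Set.Ioi t, ψ s * ρ s ^ n)
    (v₀ : ℝ) (hv₀ : v₀ = c * ∫ s in Set.Ioi A, ψ s * ρ s ^ n)
    (τ : ℝ → ℝ) (hτ : Set.InvOn τ v (Set.Ioi A) (Set.Ioo 0 v₀))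
    (hρ'_neg : ∀ t ∈ Set.Ioi A, deriv ρ t < 0)
    (hmono : AntitoneOn (fun t => deriv ρ t / (ρ t * ψ t)) (Set.Ioi A)) :
    ∃ L : EReal, L ≤ 0 ∧
      Tendsto (fun t => ((deriv ρ t / (ρ t * ψ t) : ℝ) : EReal)) atTop (𝓝 L) ∧
      Tendsto (fun w => ((deriv (fun w' => c * ρ (τ w') ^ n) w : ℝ) : EReal))
        (𝓝[>] (0 : ℝ)) (𝓝 (-((n : ℝ) : EReal) * L)) := by
  set f : ℝ → ℝ := fun s => ψ s * ρ s ^ n with hf_def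
  set g : ℝ → ℝ := fun t => deriv ρ t / (ρ t * ψ t) with hg_def
  -- basic facts about f
  have hfc : ContinuousOn f (Set.Ioi A) :=
    (hψ.continuousOn).mul ((hρ.continuousOn).pow n)
  have hfpos : ∀ t ∈ Set.Ioi A, 0 < f t := fun t ht =>
    mul_pos (hψ_pos t ht) (pow_pos (hρ_pos t ht) n)
  have hfca : ∀ t ∈ Set.Ioi A, ContinuousAt f t := fun t ht =>
    hfc.continuousAt (Ioi_mem_nhds ht)
  have hfi_Ioc : ∀ a b : ℝ, A ≤ a → IntegrableOn f (Set.Ioc a b) :=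
    fun a b ha => hint.mono_set (fun x hx => lt_of_le_of_lt ha hx.1)
  have hfi_Ioi : ∀ a : ℝ, A ≤ a → IntegrableOn f (Set.Ioi a) :=
    fun a ha => hint.mono_set (fun x hx => lt_of_le_of_lt ha hx)
  have hii : ∀ a b : ℝ, A ≤ a → a ≤ b → IntervalIntegrable f volume a b := fun a b ha hab => by
    rw [intervalIntegrable_iff_integrableOn_Ioc_of_le hab]; exact hfi_Ioc a b ha
  -- v₀ > 0 and v positive
  have hIpos : ∀ a : ℝ, A ≤ a → 0 < ∫ s in Set.Ioi a, f s := by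
    intro a ha
    have hsplit : Set.Ioc a (a+1) ∪ Set.Ioi (a+1) = Set.Ioi a :=
      Set.Ioc_union_Ioi_eq_Ioi (by linarith)
    have h1 : 0 < ∫ s in Set.Ioc a (a+1), f s := by
      rw [← intervalIntegral.integral_of_le (by linarith : a ≤ a + 1)]
      exact intervalIntegral.intervalIntegral_pos_of_pos_on (hii a (a+1) ha (by linarith))
        (fun x hx => hfpos x (lt_of_le_of_lt ha hx.1)) (by linarith)
    have h2 : 0 ≤ ∫ s in Set.Ioi (a+1), f s :=
      setIntegral_nonneg measurableSet_Ioi (fun x hx => (hfpos x (by simp only [Set.mem_Ioi] at hx ⊢; linarith)).le)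
    have := MeasureTheory.setIntegral_union (Set.Ioc_disjoint_Ioi le_rfl) measurableSet_Ioi
      (hfi_Ioc a (a+1) ha) (hfi_Ioi (a+1) (by linarith))
    rw [hsplit] at this
    rw [this]; linarith
  have hv₀pos : 0 < v₀ := by rw [hv₀]; exact mul_pos hc (hIpos A le_rfl)
  -- decomposition of v on Ioi A
  have hveq : ∀ t ∈ Set.Ioi A, v t = v₀ - c * ∫ s in A..t, f s := by
    intro t ht
    have hsplit : Set.Ioc A t ∪ Set.Ioi t = Set.Ioi A := Set.Ioc_union_Ioi_eq_Ioi (le_of_lt ht)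
    have hsum := MeasureTheory.setIntegral_union (Set.Ioc_disjoint_Ioi le_rfl) measurableSet_Ioi
      (hfi_Ioc A t le_rfl) (hfi_Ioi t (le_of_lt ht))
    rw [hsplit] at hsum
    rw [hv t, hv₀, intervalIntegral.integral_of_le (le_of_lt ht), hsum]
    ring
  -- derivative of v
  have hvderiv : ∀ t ∈ Set.Ioi A, HasDerivAt v (-(c * f t)) t := by
    intro t ht
    have hFTC : HasDerivAt (fun u => ∫ s in A..u, f s) (f t) t :=
      intervalIntegral.integral_hasDerivAt_right (hii A t le_rfl (le_of_lt ht))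
        (hfc.stronglyMeasurableAtFilter isOpen_Ioi t ht) (hfca t ht)
    have h2 : HasDerivAt (fun u => v₀ - c * ∫ s in A..u, f s) (-(c * f t)) t := by
      simpa using ((hFTC.const_mul c).const_sub v₀)
    refine h2.congr_of_eventuallyEq ?_
    filter_upwards [Ioi_mem_nhds ht] with x hx
    exact hveq x hx
  have hvcont : ContinuousOn v (Set.Ioi A) := fun t ht =>
    (hvderiv t ht).continuousAt.continuousWithinAt
  have hvanti : StrictAntiOn v (Set.Ioi A) := by
    apply strictAntiOn_of_deriv_neg (convex_Ioi A) hvcont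
    intro x hx
    rw [interior_Ioi] at hx
    rw [(hvderiv x hx).deriv]
    have := hfpos x hx
    nlinarith
  -- range facts
  have hv_pos : ∀ t ∈ Set.Ioi A, 0 < v t := fun t ht => by
    rw [hv t]; exact mul_pos hc (hIpos t (le_of_lt ht))
  have hv_lt : ∀ t ∈ Set.Ioi A, v t < v₀ := by
    intro t ht
    rw [hveq t ht]
    have : 0 < ∫ s in A..t, f s :=
      intervalIntegral.intervalIntegral_pos_of_pos_on (hii A t le_rfl (le_of_lt ht))
        (fun x hx => hfpos x hx.1) ht
    nlinarith
  have hv_mem : ∀ t ∈ Set.Ioi A, v t ∈ Set.Ioo 0 v₀ := fun t ht => ⟨hv_pos t ht, hv_lt t ht⟩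
  -- v tendsto 0 at top
  have hv_top : Tendsto v atTop (𝓝 0) := by
    have h1 : Tendsto (fun t => ∫ s in A..t, f s) atTop (𝓝 (∫ s in Set.Ioi A, f s)) :=
      MeasureTheory.intervalIntegral_tendsto_integral_Ioi A hint tendsto_id
    have h2 : Tendsto (fun t => v₀ - c * ∫ s in A..t, f s) atTop (𝓝 0) := by
      have := (h1.const_mul c).const_sub v₀
      rw [hv₀] at this ⊢
      simpa using this
    refine h2.congr' ?_
    filter_upwards [eventually_gt_atTop A] with t ht
    exact (hveq t ht).symm
  -- v tendsto v₀ at A from the right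
  have hv_A : Tendsto v (𝓝[>] A) (𝓝 v₀) := by
    have hic : IntegrableOn f (Set.Icc A (A+1)) := by
      rw [integrableOn_Icc_iff_integrableOn_Ioc]
      exact hfi_Ioc A (A+1) le_rfl
    have hcp := intervalIntegral.continuousOn_primitive (μ := volume) (f := f) (a := A) (b := A+1) hic
    have h0 : ContinuousWithinAt (fun x => ∫ t in Set.Ioc A x, f t) (Set.Icc A (A+1)) A :=
      hcp A (by constructor <;> linarith)
    have h0' : Tendsto (fun x => ∫ t in Set.Ioc A x, f t) (𝓝[>] A) (𝓝 0) := by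
      have : (∫ t in Set.Ioc A A, f t) = 0 := by simp
      have h1 := h0.tendsto
      rw [this] at h1
      refine h1.comp ?_
      rw [← nhdsWithin_Ioo_eq_nhdsGT (by linarith : A < A + 1)]
      exact tendsto_nhdsWithin_mono_left Set.Ioo_subset_Icc_self tendsto_id |>.comp tendsto_id
    have h2 : Tendsto (fun t => v₀ - c * ∫ s in Set.Ioc A t, f s) (𝓝[>] A) (𝓝 v₀) := by
      have := (h0'.const_mul c).const_sub v₀
      simpa using this
    refine h2.congr' ?_
    filter_upwards [self_mem_nhdsWithin] with t ht
    rw [hveq t ht, intervalIntegral.integral_of_le (le_of_lt ht)]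
  -- surjectivity of v onto Ioo 0 v₀
  have hsurj : ∀ y ∈ Set.Ioo 0 v₀, ∃ t ∈ Set.Ioi A, v t = y := by
    rintro y ⟨hy0, hyv⟩
    have h1 : ∀ᶠ t in 𝓝[>] A, v t > y := hv_A.eventually (eventually_gt_nhds hyv)
    obtain ⟨t₁, ht₁A, ht₁⟩ : ∃ t₁ ∈ Set.Ioi A, v t₁ > y := by
      rcases (h1.and self_mem_nhdsWithin).exists with ⟨t₁, h₁, h₂⟩
      exact ⟨t₁, h₂, h₁⟩
    obtain ⟨t₂', ht₂'⟩ : ∃ t₂', ∀ s ≥ t₂', v s < y :=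
      (hv_top.eventually (eventually_lt_nhds hy0)).exists_forall_of_atTop
    set t₂ := max t₂' t₁ with ht₂def
    have ht₁₂ : t₁ ≤ t₂ := le_max_right _ _
    have ht₂A : t₂ ∈ Set.Ioi A := lt_of_lt_of_le ht₁A ht₁₂
    have hvt₂ : v t₂ < y := ht₂' t₂ (le_max_left _ _)
    have hsub : Set.Icc t₁ t₂ ⊆ Set.Ioi A := fun x hx => lt_of_lt_of_le ht₁A hx.1
    have : y ∈ v '' Set.Icc t₁ t₂ := by
      apply intermediate_value_Icc' ht₁₂ (hvcont.mono hsub)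
      exact ⟨hvt₂.le, ht₁.le⟩
    obtain ⟨t, htmem, htv⟩ := this
    exact ⟨t, hsub htmem, htv⟩
  -- τ maps into Ioi A and is a genuine two-sided inverse
  have hτmem : ∀ w ∈ Set.Ioo 0 v₀, τ w ∈ Set.Ioi A := by
    intro w hw
    obtain ⟨t, htA, htv⟩ := hsurj w hw
    have : τ w = t := by rw [← htv]; exact hτ.1 htA
    rw [this]; exact htA
  have hvτ : ∀ w ∈ Set.Ioo 0 v₀, v (τ w) = w := fun w hw => hτ.2 hw
  have himg : τ '' Set.Ioo 0 v₀ = Set.Ioi A := by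
    apply Set.Subset.antisymm
    · rintro x ⟨w, hw, rfl⟩; exact hτmem w hw
    · intro x hx
      exact ⟨v x, hv_mem x hx, hτ.1 hx⟩
  have hτanti : StrictAntiOn τ (Set.Ioo 0 v₀) := by
    intro w₁ hw₁ w₂ hw₂ h12
    by_contra hle
    push_neg at hle
    have h := hvanti.antitoneOn (hτmem w₁ hw₁) (hτmem w₂ hw₂) hle
    rw [hvτ w₁ hw₁, hvτ w₂ hw₂] at h
    exact absurd h (not_le.mpr h12)
  -- τ tends to infinity as w → 0⁺
  have hτtop : Tendsto τ (𝓝[>] (0:ℝ)) atTop := by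
    rw [tendsto_atTop]
    intro M
    set t₀ : ℝ := max M A + 1 with ht₀def
    have ht₀A : t₀ ∈ Set.Ioi A := by
      simp only [Set.mem_Ioi, ht₀def]
      have := le_max_right M A; linarith
    have hvt₀ : v t₀ ∈ Set.Ioo 0 v₀ := hv_mem t₀ ht₀A
    have hmem : Set.Ioo (0:ℝ) (v t₀) ∈ 𝓝[>] (0:ℝ) :=
      Ioo_mem_nhdsGT_of_mem ⟨le_rfl, hvt₀.1⟩
    filter_upwards [hmem] with w hw
    have hw' : w ∈ Set.Ioo 0 v₀ := ⟨hw.1, lt_trans hw.2 hvt₀.2⟩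
    have hτw : τ w ∈ Set.Ioi A := hτmem w hw'
    by_contra hlt
    push_neg at hlt
    have hτt₀ : τ w ≤ t₀ := by
      have h1 := le_max_left M A
      have h2 : M ≤ t₀ := by simp only [ht₀def]; linarith
      linarith
    have := hvanti.antitoneOn hτw ht₀A hτt₀
    rw [hvτ w hw'] at this
    exact absurd (lt_of_lt_of_le hw.2 this) (lt_irrefl _)
  -- continuity of τ
  have hτcont : ∀ w ∈ Set.Ioo 0 v₀, ContinuousAt τ w := by
    intro w hw
    have hmono' : StrictMonoOn (fun x => -(τ x)) (Set.Ioo 0 v₀) := by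
      intro a ha b hb hab
      simpa using hτanti ha hb hab
    have himg' : (fun x => -(τ x)) '' Set.Ioo 0 v₀ = Set.Iio (-A) := by
      have : (fun x => -(τ x)) '' Set.Ioo 0 v₀ = Neg.neg '' (τ '' Set.Ioo 0 v₀) := by
        rw [Set.image_image]
      rw [this, himg, Set.image_neg_Ioi]
    have hca : ContinuousAt (fun x => -(τ x)) w := by
      apply StrictMonoOn.continuousAt_of_image_mem_nhds hmono'
        (isOpen_Ioo.mem_nhds hw)
      rw [himg']
      exact isOpen_Iio.mem_nhds (by simpa using hτmem w hw)
    have : ContinuousAt (fun x => -(-(τ x))) w := hca.neg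
    simpa using this
  -- derivative of τ
  have hτderiv : ∀ w ∈ Set.Ioo 0 v₀, HasDerivAt τ (-(c * f (τ w)))⁻¹ w := by
    intro w hw
    refine HasDerivAt.of_local_left_inverse (hτcont w hw) (hvderiv (τ w) (hτmem w hw)) ?_ ?_
    · have := hfpos (τ w) (hτmem w hw)
      have : -(c * f (τ w)) < 0 := by nlinarith
      exact ne_of_lt this
    · filter_upwards [isOpen_Ioo.mem_nhds hw] with y hy
      exact hvτ y hy
  -- derivative of η
  have hηderiv : ∀ w ∈ Set.Ioo 0 v₀,
      HasDerivAt (fun w' => c * ρ (τ w') ^ n) (-((n:ℝ) * g (τ w))) w := by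
    intro w hw
    have htw := hτmem w hw
    have hρd : HasDerivAt ρ (deriv ρ (τ w)) (τ w) :=
      ((hρ.contDiffAt (Ioi_mem_nhds htw)).differentiableAt one_ne_zero).hasDerivAt
    have h1 : HasDerivAt (fun w' => ρ (τ w')) (deriv ρ (τ w) * (-(c * f (τ w)))⁻¹) w :=
      hρd.comp w (hτderiv w hw)
    have h2 : HasDerivAt (fun w' => c * ρ (τ w') ^ n)
        (c * ((n:ℝ) * ρ (τ w) ^ (n - 1) * (deriv ρ (τ w) * (-(c * f (τ w)))⁻¹))) w :=
      (h1.pow n).const_mul c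
    convert h2 using 1
    have hρt := hρ_pos (τ w) htw
    have hψt := hψ_pos (τ w) htw
    have hpow : ρ (τ w) ^ n = ρ (τ w) ^ (n-1) * ρ (τ w) := by
      rw [← pow_succ]; congr 1; omega
    simp only [hg_def, hf_def]
    rw [hpow]
    have h3 : ρ (τ w) ^ (n-1) > 0 := pow_pos hρt _
    field_simp
  -- the limit L
  set F : ℝ → EReal := fun t => ((g (max t (A+1)) : ℝ) : EReal) with hF_def
  have hFanti : Antitone F := by
    intro t₁ t₂ h12
    simp only [hF_def]
    rw [EReal.coe_le_coe_iff]
    exact hmono (by simp only [Set.mem_Ioi]; have := le_max_right t₁ (A+1); linarith)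
      (by simp only [Set.mem_Ioi]; have := le_max_right t₂ (A+1); linarith)
      (max_le_max h12 le_rfl)
  obtain ⟨L, hFt⟩ : ∃ L : EReal, Tendsto F atTop (𝓝 L) := ⟨_, tendsto_atTop_iInf hFanti⟩
  have hgt : Tendsto (fun t => ((g t : ℝ) : EReal)) atTop (𝓝 L) := by
    refine hFt.congr' ?_
    filter_upwards [eventually_ge_atTop (A+1)] with t ht
    simp only [hF_def, max_eq_left ht]
  have hgneg : ∀ t ∈ Set.Ioi A, g t < 0 := by
    intro t ht
    exact div_neg_of_neg_of_pos (hρ'_neg t ht) (mul_pos (hρ_pos t ht) (hψ_pos t ht))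
  have hnpos : (0:ℝ) < (n:ℝ) := by exact_mod_cast Nat.lt_of_lt_of_le Nat.zero_lt_one hn
  have hL0 : L ≤ 0 := by
    refine le_of_tendsto hgt ?_
    filter_upwards [eventually_gt_atTop A] with t ht
    exact_mod_cast (hgneg t ht).le
  have hLne : L ≠ ⊤ := by
    intro h
    rw [h] at hL0
    exact absurd hL0 (by simp)
  refine ⟨L, hL0, hgt, ?_⟩
  -- the composed limit
  have hcomp : Tendsto (fun w => ((g (τ w) : ℝ) : EReal)) (𝓝[>] (0:ℝ)) (𝓝 L) :=
    hgt.comp hτtop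
  have hev : ∀ᶠ w in 𝓝[>] (0:ℝ), deriv (fun w' => c * ρ (τ w') ^ n) w = -((n:ℝ) * g (τ w)) := by
    filter_upwards [Ioo_mem_nhdsGT_of_mem ⟨le_rfl, hv₀pos⟩] with w hw
    exact (hηderiv w hw).deriv
  have key : Tendsto (fun w => ((-((n:ℝ) * g (τ w)) : ℝ) : EReal)) (𝓝[>] (0:ℝ))
      (𝓝 (-((n : ℝ) : EReal) * L)) := by
    induction L using EReal.rec with
    | bot =>
      have hmul : (-((n : ℝ) : EReal)) * (⊥ : EReal) = ⊤ := by
        rw [show -((n : ℝ) : EReal) = ((-(n:ℝ) : ℝ) : EReal) by rw [EReal.coe_neg]]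
        exact EReal.coe_mul_bot_of_neg (by linarith)
      rw [hmul]
      have hreal : Tendsto (fun w => g (τ w)) (𝓝[>] (0:ℝ)) atBot := by
        rw [tendsto_atBot]
        intro b
        filter_upwards [(EReal.tendsto_nhds_bot_iff_real.1 hcomp) b] with w hw
        exact le_of_lt (by exact_mod_cast hw)
      rw [EReal.tendsto_nhds_top_iff_real]
      intro x
      have h2 : Tendsto (fun w => -((n:ℝ) * g (τ w))) (𝓝[>] (0:ℝ)) atTop := by
        have := (tendsto_const_mul_atBot_of_pos hnpos).2 hreal
        exact tendsto_neg_atBot_atTop.comp this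
      filter_upwards [h2.eventually (eventually_gt_atTop x)] with w hw
      exact_mod_cast hw
    | coe l =>
      have hmul : (-((n : ℝ) : EReal)) * ((l:ℝ) : EReal) = ((-((n:ℝ) * l) : ℝ) : EReal) := by
        rw [← EReal.coe_neg, ← EReal.coe_mul, neg_mul]
      rw [hmul, EReal.tendsto_coe]
      rw [EReal.tendsto_coe] at hcomp
      exact (hcomp.const_mul ((n:ℝ))).neg
    | top => exact absurd rfl hLne
  refine key.congr' ?_
  filter_upwards [hev] with w hw
  rw [hw]
end

section
/- Let δ ∈ (0, 1), γ > 1, and c₁ ≥ 0, and let η : (0, δ) → ℝ be differentiable. For every v ∈ (0, δ) one has 0 < v − v^γ < v < δ, so the function η₂ : (0, δ) → ℝ defined by η₂(v) = η(v − v^γ) − c₁·v^γ is well-defined; moreover η₂ is differentiable on (0, δ) and liminf_{v→0⁺} η₂′(v) = liminf_{t→0⁺} η′(t), where both liminfs are taken in the extended reals. -/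
open Filter Topology Set

/-- Reparametrization step: for `δ ∈ (0,1)`, `γ > 1`, `c₁ ≥ 0`, and `η` differentiable
on `(0, δ)`, the map `v ↦ v − v^γ` sends `(0, δ)` into itself with `0 < v − v^γ < v < δ`,
the modified function `η₂(v) = η(v − v^γ) − c₁·v^γ` is differentiable on `(0, δ)`, and
`liminf_{v→0⁺} η₂′(v) = liminf_{t→0⁺} η′(t)` in the extended reals. -/
theorem liminf_deriv_reparametrized
    (δ γ c₁ : ℝ) (hδ : δ ∈ Set.Ioo 0 1) (hγ : 1 < γ) (hc₁ : 0 ≤ c₁)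
    (η : ℝ → ℝ) (hη : ∀ t ∈ Set.Ioo 0 δ, DifferentiableAt ℝ η t) :
    (∀ v ∈ Set.Ioo 0 δ, 0 < v - v ^ γ ∧ v - v ^ γ < v ∧ v < δ) ∧
      (∀ v ∈ Set.Ioo 0 δ,
        DifferentiableAt ℝ (fun v' => η (v' - v' ^ γ) - c₁ * v' ^ γ) v) ∧
      Filter.liminf (fun v => ((deriv (fun v' => η (v' - v' ^ γ) - c₁ * v' ^ γ) v : ℝ) : EReal))
          (𝓝[>] (0 : ℝ))
        = Filter.liminf (fun t => ((deriv η t : ℝ) : EReal)) (𝓝[>] (0 : ℝ)) := by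
  obtain ⟨hδ0, hδ1⟩ := hδ
  have hγ0 : (0:ℝ) < γ := by linarith
  set φ : ℝ → ℝ := fun v => v - v ^ γ with hφdef
  set u : ℝ → ℝ := fun v => γ * v ^ (γ - 1) with hudef
  set η₂ : ℝ → ℝ := fun v' => η (v' - v' ^ γ) - c₁ * v' ^ γ with hη₂def
  -- sandwich
  have sand : ∀ v ∈ Set.Ioo (0:ℝ) δ, 0 < v - v ^ γ ∧ v - v ^ γ < v ∧ v < δ := by
    rintro v ⟨hv0, hvδ⟩
    have h1 : v ^ γ < v ^ (1:ℝ) :=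
      Real.rpow_lt_rpow_of_exponent_gt hv0 (hvδ.trans hδ1) hγ
    rw [Real.rpow_one] at h1
    have h2 : 0 < v ^ γ := Real.rpow_pos_of_pos hv0 γ
    exact ⟨by linarith, by linarith, hvδ⟩
  have hu_pos : ∀ v : ℝ, 0 < v → 0 < u v := fun v hv =>
    mul_pos hγ0 (Real.rpow_pos_of_pos hv _)
  have hφd : ∀ v : ℝ, 0 < v → HasDerivAt φ (1 - u v) v := by
    intro v hv
    have h := Real.hasDerivAt_rpow_const (x := v) (p := γ) (Or.inl hv.ne')
    simpa [hφdef, hudef, Pi.sub_def] using (hasDerivAt_id' v).sub h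
  have hd : ∀ v ∈ Set.Ioo (0:ℝ) δ,
      HasDerivAt η₂ (deriv η (φ v) * (1 - u v) - c₁ * u v) v := by
    intro v hv
    have hs := sand v hv
    have hmem : φ v ∈ Set.Ioo (0:ℝ) δ := ⟨hs.1, hs.2.1.trans hs.2.2⟩
    have h1 : HasDerivAt (fun v' => η (v' - v' ^ γ)) (deriv η (φ v) * (1 - u v)) v :=
      (hη _ hmem).hasDerivAt.comp v (hφd v hv.1)
    have h2 : HasDerivAt (fun v' : ℝ => c₁ * v' ^ γ) (c₁ * u v) v := by
      have := (Real.hasDerivAt_rpow_const (x := v) (p := γ) (Or.inl hv.1.ne')).const_mul c₁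
      simpa [hudef, mul_assoc] using this
    exact h1.sub h2
  have hderiv : ∀ v ∈ Set.Ioo (0:ℝ) δ,
      deriv η₂ v = deriv η (φ v) * (1 - u v) - c₁ * u v := fun v hv => (hd v hv).deriv
  -- u tends to 0 from the right
  have hu0 : Tendsto u (𝓝[>] (0:ℝ)) (𝓝 0) := by
    have h1 : ContinuousAt (fun v : ℝ => v ^ (γ - 1)) 0 :=
      Real.continuousAt_rpow_const 0 (γ - 1) (Or.inr (by linarith))
    have h2 : Tendsto (fun v : ℝ => v ^ (γ - 1)) (𝓝[>] (0:ℝ)) (𝓝 ((0:ℝ) ^ (γ - 1))) :=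
      h1.tendsto.mono_left nhdsWithin_le_nhds
    have h3 := h2.const_mul γ
    simpa [hudef, Real.zero_rpow (show γ - 1 ≠ 0 from ne_of_gt (by linarith))] using h3
  have hcu0 : Tendsto (fun v => c₁ * u v) (𝓝[>] (0:ℝ)) (𝓝 0) := by
    simpa using hu0.const_mul c₁
  have hφc : Continuous φ := by
    rw [continuous_iff_continuousAt]
    intro x
    exact continuousAt_id.sub (Real.continuousAt_rpow_const x γ (Or.inr hγ0.le))
  have hφ0 : φ 0 = 0 := by simp [hφdef, Real.zero_rpow hγ0.ne']
  have hIoo : Set.Ioo (0:ℝ) δ ∈ 𝓝[>] (0:ℝ) := Ioo_mem_nhdsGT_of_mem ⟨le_refl _, hδ0⟩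
  -- pull back "frequently" statements through φ
  have pullback : ∀ p : ℝ → Prop, (∃ᶠ t in 𝓝[>] (0:ℝ), p t) →
      ∃ᶠ v in 𝓝[>] (0:ℝ), p (φ v) := by
    intro p hp
    rw [frequently_iff]
    intro U hU
    obtain ⟨ε, hε, hsub⟩ := mem_nhdsGT_iff_exists_Ioo_subset.mp hU
    set w : ℝ := min ε δ / 2 with hw
    have hw0 : 0 < w := by
      have h := lt_min (Set.mem_Ioi.mp hε) hδ0; rw [hw]; linarith
    have hεpos : 0 < ε := hε
    have hwδ : w < δ := by
      have h := min_le_right ε δ; rw [hw]; linarith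
    have hwε : w < ε := by
      have h := min_le_left ε δ; rw [hw]; linarith
    have hφw0 : 0 < φ w := (sand w ⟨hw0, hwδ⟩).1
    obtain ⟨t, ht, hpt⟩ := frequently_iff.mp hp (Ioo_mem_nhdsGT_of_mem ⟨le_refl _, hφw0⟩)
    have himg : t ∈ φ '' Set.Ioo 0 w := by
      apply intermediate_value_Ioo hw0.le hφc.continuousOn
      rw [hφ0]; exact ht
    obtain ⟨v, hv, hφv⟩ := himg
    exact ⟨v, hsub ⟨hv.1, hv.2.trans hwε⟩, by rw [hφv]; exact hpt⟩
  -- φ tends into 𝓝[>] 0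
  have hφt : Tendsto φ (𝓝[>] (0:ℝ)) (𝓝[>] (0:ℝ)) := by
    apply tendsto_nhdsWithin_of_tendsto_nhds_of_eventually_within
    · have := (hφc.tendsto 0).mono_left (nhdsWithin_le_nhds (s := Set.Ioi (0:ℝ)))
      rwa [hφ0] at this
    · filter_upwards [hIoo] with v hv
      exact (sand v hv).1
  set M : EReal := Filter.liminf (fun v => ((deriv η₂ v : ℝ) : EReal)) (𝓝[>] (0:ℝ)) with hM
  set L : EReal := Filter.liminf (fun t => ((deriv η t : ℝ) : EReal)) (𝓝[>] (0:ℝ)) with hL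
  -- lower bound
  have lower : ∀ s : ℝ, (s : EReal) < L → ∀ ε : ℝ, 0 < ε → ε ≤ 1 →
      ((s - ε * |s| - ε : ℝ) : EReal) ≤ M := by
    intro s hsL ε hε0 hε1
    have hev : ∀ᶠ t in 𝓝[>] (0:ℝ), s < deriv η t := by
      filter_upwards [eventually_lt_of_lt_liminf hsL] with t ht
      exact_mod_cast ht
    have hev' : ∀ᶠ v in 𝓝[>] (0:ℝ), s < deriv η (φ v) := hφt.eventually hev
    have hu_lt : ∀ᶠ v in 𝓝[>] (0:ℝ), u v < ε := hu0.eventually_lt_const hε0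
    have hcu_lt : ∀ᶠ v in 𝓝[>] (0:ℝ), c₁ * u v < ε := hcu0.eventually_lt_const hε0
    refine Filter.le_liminf_of_le (by isBoundedDefault) ?_
    filter_upwards [hev', hu_lt, hcu_lt, hIoo] with v h1 h2 h3 h4
    rw [EReal.coe_le_coe_iff, hderiv v h4]
    have hu' : 0 < u v := hu_pos v h4.1
    have habs1 : s ≤ |s| := le_abs_self s
    have habs2 : -s ≤ |s| := neg_le_abs s
    nlinarith [mul_nonneg (sub_nonneg.2 h1.le) (by linarith : (0:ℝ) ≤ 1 - u v),
      mul_le_mul_of_nonneg_left h2.le (abs_nonneg s),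
      mul_nonneg (abs_nonneg s) hu'.le]
  have hLM : L ≤ M := by
    by_contra h
    push_neg at h
    obtain ⟨s, hMs, hsL⟩ := EReal.exists_between_coe_real h
    obtain ⟨s', hMs', hs's⟩ := EReal.exists_between_coe_real hMs
    set ε : ℝ := min 1 ((s - s') / (|s| + 1)) with hε
    have habs : (0:ℝ) < |s| + 1 := by positivity
    have hss' : (0:ℝ) < s - s' := by
      have := hs's; rw [EReal.coe_lt_coe_iff] at this; linarith
    have hε0 : 0 < ε := lt_min one_pos (by positivity)
    have hε1 : ε ≤ 1 := min_le_left _ _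
    have hkey := lower s hsL ε hε0 hε1
    have : s' ≤ s - ε * |s| - ε := by
      have h2 : ε ≤ (s - s') / (|s| + 1) := min_le_right _ _
      have h3 : ε * (|s| + 1) ≤ s - s' := by
        rw [← le_div_iff₀ habs]; exact h2
      nlinarith
    have : ((s' : ℝ) : EReal) ≤ M := le_trans (by exact_mod_cast this) hkey
    exact absurd hMs' (not_lt.2 this)
  -- upper bound
  have upper : ∀ s : ℝ, L < (s : EReal) → ∀ ε : ℝ, 0 < ε → ε ≤ 1 →
      M ≤ ((s + ε * |s| : ℝ) : EReal) := by
    intro s hLs ε hε0 hε1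
    have hfr : ∃ᶠ t in 𝓝[>] (0:ℝ), deriv η t < s := by
      have := frequently_lt_of_liminf_lt (f := 𝓝[>] (0:ℝ)) (by isBoundedDefault) hLs
      apply this.mono
      intro t ht
      exact_mod_cast ht
    have hfr' : ∃ᶠ v in 𝓝[>] (0:ℝ), deriv η (φ v) < s := pullback _ hfr
    have hu_lt : ∀ᶠ v in 𝓝[>] (0:ℝ), u v < ε := hu0.eventually_lt_const hε0
    have hcomb : ∃ᶠ v in 𝓝[>] (0:ℝ),
        ((deriv η₂ v : ℝ) : EReal) ≤ ((s + ε * |s| : ℝ) : EReal) := by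
      apply ((hfr'.and_eventually hu_lt).and_eventually hIoo).mono
      rintro v ⟨⟨h1, h2⟩, h4⟩
      rw [EReal.coe_le_coe_iff, hderiv v h4]
      have hu' : 0 < u v := hu_pos v h4.1
      have habs1 : s ≤ |s| := le_abs_self s
      have habs2 : -s ≤ |s| := neg_le_abs s
      nlinarith [mul_nonneg (sub_nonneg.2 h1.le) (by linarith : (0:ℝ) ≤ 1 - u v),
        mul_le_mul_of_nonneg_left h2.le (abs_nonneg s),
        mul_nonneg (abs_nonneg s) hu'.le, mul_nonneg hc₁ hu'.le]
    exact liminf_le_of_frequently_le hcomb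
  have hML : M ≤ L := by
    by_contra h
    push_neg at h
    obtain ⟨s, hLs, hsM⟩ := EReal.exists_between_coe_real h
    obtain ⟨s', hss', hs'M⟩ := EReal.exists_between_coe_real hsM
    set ε : ℝ := min 1 ((s' - s) / (|s| + 1)) with hε
    have habs : (0:ℝ) < |s| + 1 := by positivity
    have hss : (0:ℝ) < s' - s := by
      have := hss'; rw [EReal.coe_lt_coe_iff] at this; linarith
    have hε0 : 0 < ε := lt_min one_pos (by positivity)
    have hε1 : ε ≤ 1 := min_le_left _ _
    have hkey := upper s hLs ε hε0 hε1
    have : s + ε * |s| ≤ s' := by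
      have h2 : ε ≤ (s' - s) / (|s| + 1) := min_le_right _ _
      have h3 : ε * (|s| + 1) ≤ s' - s := by
        rw [← le_div_iff₀ habs]; exact h2
      nlinarith
    have : M ≤ ((s' : ℝ) : EReal) := le_trans hkey (by exact_mod_cast this)
    exact absurd hs'M (not_lt.2 this)
  exact ⟨sand, fun v hv => (hd v hv).differentiableAt, le_antisymm hML hLM⟩
end
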